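/- Let G be a 3-edge-connected, internally 4-edge-connected graph with |V(G)| ≥ 5, and suppose there exists W ⊂ V(G) with 1 ≤ |W| ≤ 2 such that the graph obtained from G by identifying W to a single vertex (deleting any resulting loops) is a doubled cycle. Then G has no immersion of W_4. -/

import Mathlib

open scoped Classical

noncomputable section

namespace PaperW4

/-- A finite loopless undirected multigraph on ambient vertex type `V`:
a finite vertex set together with a multiset of (non-loop) edges supported on it. -/
structure MG (V : Type) where
  verts : Finset V
  edges : Multiset (Sym2 V)
  edge_support : ∀ e ∈ edges, ∀ v ∈ e, v ∈ verts
  loopless : ∀ e ∈ edges, ¬ e.IsDiag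

variable {V : Type} {W : Type}

/-- `δ_G(X)`: the edges of `G` with exactly one endpoint in `X`. -/
def cutEdges (G : MG V) (X : Finset V) : Multiset (Sym2 V) :=
  G.edges.filter fun e => ∃ u v, e = s(u, v) ∧ u ∈ X ∧ v ∉ X

/-- `d_G(X) = |δ_G(X)|`. -/
def dcut (G : MG V) (X : Finset V) : ℕ := (cutEdges G X).card

/-- The degree of a vertex: the number of edges incident with it. -/
def deg (G : MG V) (v : V) : ℕ := (G.edges.filter fun e => v ∈ e).card

/-- `e_G(u,v)`: the number of edges joining `u` and `v`. -/
def emult (G : MG V) (u v : V) : ℕ := G.edges.count s(u, v)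

/-- `G` is `k`-edge-connected: every edge-cut `δ(X)` with `∅ ≠ X ⊊ V(G)` has size `≥ k`. -/
def EdgeConn (G : MG V) (k : ℕ) : Prop :=
  ∀ X : Finset V, X ⊆ G.verts → X.Nonempty → X ≠ G.verts → k ≤ dcut G X

/-- `G` is internally `k`-edge-connected: every edge-cut with at least two vertices
on each side has size `≥ k`. -/
def InternallyEdgeConn (G : MG V) (k : ℕ) : Prop :=
  ∀ X : Finset V, X ⊆ G.verts → 2 ≤ X.card → 2 ≤ (G.verts \ X).card → k ≤ dcut G X

/-- Every vertex has degree three. -/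
def Cubic (G : MG V) : Prop := ∀ v ∈ G.verts, deg G v = 3

/-- The multiset of edges traversed by a walk, given as its list of vertices. -/
def walkEdges (l : List V) : Multiset (Sym2 V) :=
  (↑((l.zip l.tail).map fun p => s(p.1, p.2)) : Multiset (Sym2 V))

/-- `l` is (the vertex sequence of) a walk from `u` to `v`. -/
def IsWalk (l : List V) (u v : V) : Prop :=
  l.head? = some u ∧ l.getLast? = some v

/-- `G` is connected: any two of its vertices are joined by a trail in `G`. -/
def Connected (G : MG V) : Prop :=
  ∀ u ∈ G.verts, ∀ v ∈ G.verts,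
    ∃ l : List V, IsWalk l u v ∧ walkEdges l ≤ G.edges ∧ ∀ w ∈ l, w ∈ G.verts

/-- An immersion of the loopless multigraph with vertex type `W` and edge multiset `H`
into `G`, with terminal map `φ`: `φ` is injective, and to each edge `uv` of `H` is
assigned a walk in `G` from `φ u` to `φ v`, these walks being globally edge-disjoint. -/
def ImmersionVia (G : MG V) (H : Multiset (Sym2 W)) (φ : W → V) : Prop :=
  Function.Injective φ ∧ (∀ w : W, φ w ∈ G.verts) ∧
  ∃ P : Multiset (Sym2 W × List V),
    P.map Prod.fst = H ∧
    (∀ p ∈ P, ∃ u v : W, p.1 = s(u, v) ∧ IsWalk p.2 (φ u) (φ v)) ∧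
    (P.map fun p => walkEdges p.2).sum ≤ G.edges

/-- The edges of the wheel `W₄`: vertex `0` is the center, `1,2,3,4` the rim cycle. -/
def w4Edges : Multiset (Sym2 (Fin 5)) :=
  {s(0, 1), s(0, 2), s(0, 3), s(0, 4), s(1, 2), s(2, 3), s(3, 4), s(4, 1)}

/-- `G` has an immersion of `W₄`. -/
def HasW4Immersion (G : MG V) : Prop :=
  ∃ φ : Fin 5 → V, ImmersionVia G w4Edges φ

/-- `G` (rooted at `x`) has a rooted immersion of `W₄`: one in which the
center of `W₄` corresponds to `x`. -/
def HasRootedW4Immersion (G : MG V) (x : V) : Prop :=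
  ∃ φ : Fin 5 → V, φ 0 = x ∧ ImmersionVia G w4Edges φ

/-- The edges of `D_m`: roots are `0, 1`; vertices `2, 3` play the role of `y₀, y₁`;
there are `m - 2` parallel edges between the two roots. -/
def dmEdges (m : ℕ) : Multiset (Sym2 (Fin 4)) :=
  Multiset.replicate (m - 2) s(0, 1) + {s(0, 2), s(0, 3), s(1, 2), s(1, 3), s(2, 3)}

/-- `G` with roots `x0, x1` has a rooted immersion of `D_m`. -/
def HasRootedDmImmersion (G : MG V) (m : ℕ) (x0 x1 : V) : Prop :=
  ∃ φ : Fin 4 → V, φ 0 = x0 ∧ φ 1 = x1 ∧ ImmersionVia G (dmEdges m) φ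

/-- The edges of `K₄`. -/
def k4Edges : Multiset (Sym2 (Fin 4)) :=
  {s(0, 1), s(0, 2), s(0, 3), s(1, 2), s(1, 3), s(2, 3)}

/-- A nested chain of vertex sets `C 0 ⊂ C 1 ⊂ ⋯`, each obtained from the previous
by adding one vertex, all cuts having size exactly `k`. -/
def SegChain (G : MG V) (n : ℕ) (C : Fin (n + 1) → Finset V) (k : ℕ) : Prop :=
  (∀ i, C i ⊆ G.verts) ∧
  (∀ i : Fin n, C i.castSucc ⊆ C i.succ ∧ (C i.succ \ C i.castSucc).card = 1) ∧
  (∀ i, dcut G (C i) = k)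

/-- `G` has a segmentation of width `k` relative to `(X, Y)`. -/
def HasSegmentation (G : MG V) (X Y : Finset V) (k : ℕ) : Prop :=
  ∃ (n : ℕ) (C : Fin (n + 1) → Finset V),
    SegChain G n C k ∧ C 0 = X ∧ G.verts \ C (Fin.last n) = Y

/-- `λ_s(G) ≥ m`: every edge-cut separating `x0` from `x1` has size `≥ m`. -/
def LamSGe (G : MG V) (x0 x1 : V) (m : ℕ) : Prop :=
  ∀ X : Finset V, X ⊆ G.verts → x0 ∈ X → x1 ∉ X → m ≤ dcut G X

/-- `λ_n(G) ≥ m`: every edge-cut not separating `x0` from `x1` has size `≥ m`. -/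
def LamNGe (G : MG V) (x0 x1 : V) (m : ℕ) : Prop :=
  ∀ X : Finset V, X ⊆ G.verts → X.Nonempty → X ≠ G.verts →
    (x0 ∈ X ↔ x1 ∈ X) → m ≤ dcut G X

/-- `λ_n^i(G) ≥ m`: every internal edge-cut not separating `x0` from `x1` has size `≥ m`. -/
def LamNiGe (G : MG V) (x0 x1 : V) (m : ℕ) : Prop :=
  ∀ X : Finset V, X ⊆ G.verts → 2 ≤ X.card → 2 ≤ (G.verts \ X).card →
    (x0 ∈ X ↔ x1 ∈ X) → m ≤ dcut G X

/-- The subgraph of `G` induced on `S`. -/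
def induce (G : MG V) (S : Finset V) : MG V where
  verts := G.verts ∩ S
  edges := G.edges.filter fun e => ∀ v ∈ e, v ∈ S
  edge_support := by
    intro e he v hv
    rw [Multiset.mem_filter] at he
    exact Finset.mem_inter.mpr ⟨G.edge_support e he.1 v hv, he.2 v hv⟩
  loopless := fun e he => G.loopless e (Multiset.mem_of_mem_filter he)

/-- `G` with the vertices of `S` (and all incident edges) deleted. -/
def deleteVerts (G : MG V) (S : Finset V) : MG V := induce G (G.verts \ S)

/-- `C` is (the vertex set of) a connected component of `G`. -/
def IsComponent (G : MG V) (C : Finset V) : Prop :=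
  C ⊆ G.verts ∧ C.Nonempty ∧ Connected (induce G C) ∧
  ∀ e ∈ G.edges, (∃ v ∈ e, v ∈ C) → ∀ v ∈ e, v ∈ C

/-- `G` has type `A_m` with respect to roots `x0, x1`. -/
def TypeA (G : MG V) (m : ℕ) (x0 x1 : V) : Prop :=
  ∃ X0 X1 : Finset V, x0 ∈ X0 ∧ x1 ∈ X1 ∧ X0.card ≤ 2 ∧ X1.card ≤ 2 ∧
    HasSegmentation G X0 X1 m

/-- The edges of the lobe of `G` (with roots `x0, x1`) corresponding to the
component `C` of `G ∖ {x0, x1}`: edges inside `C ∪ {x0, x1}` other than `x0x1`-edges. -/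
def lobeEdges (G : MG V) (C : Finset V) (x0 x1 : V) : Multiset (Sym2 V) :=
  G.edges.filter fun e => (∀ v ∈ e, v ∈ insert x0 (insert x1 C)) ∧ e ≠ s(x0, x1)

/-- `G` has type `B_m` with respect to roots `x0, x1`. -/
def TypeB (G : MG V) (m : ℕ) (x0 x1 : V) : Prop :=
  ∃ (k : ℕ) (C : Fin k → Finset V) (nL : Fin k → ℕ),
    Function.Injective C ∧
    (∀ D : Finset V, IsComponent (deleteVerts G {x0, x1}) D ↔ ∃ i, C i = D) ∧
    (∀ i : Fin k, 2 ≤ nL i ∧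
      ∃ l : List V, l.Nodup ∧ IsWalk l x0 x1 ∧
        l.toFinset = insert x0 (insert x1 (C i)) ∧
        (2 ≤ (C i).card → nL i = 2) ∧
        lobeEdges G (C i) x0 x1 = nL i • walkEdges l) ∧
    emult G x0 x1 + ∑ i, nL i = m + 1

/-- The edge multiset of a cycle of length `n` on the vertices `f 0, f 1, …`. -/
def cycleEdges (n : ℕ) (f : Fin n → V) : Multiset (Sym2 V) :=
  (Finset.univ.val : Multiset (Fin n)).map fun i =>
    s(f i, f ⟨(i.val + 1) % n, Nat.mod_lt _ i.pos⟩)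

/-- `G` is a doubled cycle of length `n`. -/
def IsDoubledCycleLen (G : MG V) (n : ℕ) : Prop :=
  ∃ f : Fin n → V, Function.Injective f ∧ Finset.univ.image f = G.verts ∧
    G.edges = 2 • cycleEdges n f

/-- `G` is a doubled cycle. -/
def IsDoubledCycle (G : MG V) : Prop := ∃ n, 3 ≤ n ∧ IsDoubledCycleLen G n

/-- The map collapsing all of `Y` to the vertex `y0` and fixing everything else. -/
def collapseFun (Y : Finset V) (y0 : V) : V → V := fun v => if v ∈ Y then y0 else v

/-- The image multigraph of `G` under a vertex map `f` (identification of vertices),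
with any created loops deleted. -/
def mapGraph (f : V → V) (G : MG V) : MG V where
  verts := G.verts.image f
  edges := (G.edges.map (Sym2.map f)).filter fun e => ¬e.IsDiag
  edge_support := by
    intro e he v hv
    rw [Multiset.mem_filter] at he
    obtain ⟨he, -⟩ := he
    rw [Multiset.mem_map] at he
    obtain ⟨e', he', rfl⟩ := he
    rw [Sym2.mem_map] at hv
    obtain ⟨u, hu, rfl⟩ := hv
    exact Finset.mem_image_of_mem f (G.edge_support e' he' u hu)
  loopless := by
    intro e he
    rw [Multiset.mem_filter] at he
    exact he.2

/-- `G[X]` is a chain of sausages of order `k` in `G`: identifying `V(G) ∖ X` to a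
single vertex yields a doubled cycle of length `k + 1`. -/
def ChainOfSausages (G : MG V) (X : Finset V) (k : ℕ) : Prop :=
  X ⊆ G.verts ∧ X.card = k ∧ 2 ≤ k ∧
  ∃ y0 ∈ G.verts \ X,
    IsDoubledCycleLen (mapGraph (collapseFun (G.verts \ X) y0) G) (k + 1)

/-- `G` is sausage reduced: it has no chain of sausages of order at least `3`. -/
def SausageReduced (G : MG V) : Prop :=
  ¬ ∃ (X : Finset V) (k : ℕ), 3 ≤ k ∧ ChainOfSausages G X k

/-- One sausage shortening step of a rooted graph: two adjacent vertices of a chain of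
sausages of order at least three are identified, carrying the root along. -/
def RootedShortStep (p q : MG V × V) : Prop :=
  ∃ (X : Finset V) (k : ℕ) (a b : V),
    3 ≤ k ∧ ChainOfSausages p.1 X k ∧ a ∈ X ∧ b ∈ X ∧ a ≠ b ∧ s(a, b) ∈ p.1.edges ∧
    q.1 = mapGraph (fun v => if v = b then a else v) p.1 ∧
    q.2 = (if p.2 = b then a else p.2)

/-- Deleting a single copy of the edge `e` from `G`. -/
def deleteEdge (G : MG V) (e : Sym2 V) : MG V where
  verts := G.verts
  edges := G.edges.erase e
  edge_support := fun e' he' => G.edge_support e' (Multiset.mem_of_mem_erase he')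
  loopless := fun e' he' => G.loopless e' (Multiset.mem_of_mem_erase he')

/-- `G` has a tree-decomposition of width at most `k`. -/
def HasTreeDecomp (G : MG V) (k : ℕ) : Prop :=
  ∃ (ι : Type) (T : SimpleGraph ι) (B : ι → Finset V),
    T.IsTree ∧
    (∀ t, B t ⊆ G.verts) ∧
    (∀ v ∈ G.verts, ∃ t, v ∈ B t) ∧
    (∀ e ∈ G.edges, ∃ t, ∀ v ∈ e, v ∈ B t) ∧
    (∀ v ∈ G.verts, (SimpleGraph.induce {t | v ∈ B t} T).Connected) ∧
    ∀ t, (B t).card ≤ k + 1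

/-- The tree-width of `G`. -/
def treewidth (G : MG V) : ℕ := sInf { k | HasTreeDecomp G k }

/-- One subdivision step: an edge `uv` is replaced by a path `u - w - v`
through a new vertex `w`. -/
def SubdivStep (G H : MG V) : Prop :=
  ∃ u v w : V, s(u, v) ∈ G.edges ∧ w ∉ G.verts ∧
    H.verts = insert w G.verts ∧
    H.edges = (G.edges.erase s(u, v)) + {s(u, w), s(w, v)}

/-- `H` is a subdivision of `G`. -/
def IsSubdivision (G H : MG V) : Prop := Relation.ReflTransGen SubdivStep G H

/-- `G`, rooted at `u`, has type 2 (for the rooted `W₄` theorem). -/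
def TypeTwo (G : MG V) (u : V) : Prop :=
  ∃ W0 : Finset V, W0 ⊆ G.verts ∧ u ∉ W0 ∧ 1 ≤ W0.card ∧ W0.card ≤ 2 ∧
    ∃ w0 ∈ W0,
      ∃ n : ℕ, 3 ≤ n ∧
        ∃ f : Fin n → V,
          Function.Injective f ∧
          Finset.univ.image f = (mapGraph (collapseFun W0 w0) G).verts ∧
          (∃ i, f i = u) ∧ (∃ j, f j = w0) ∧
          ((s(u, w0) ∉ cycleEdges n f ∧
              (mapGraph (collapseFun W0 w0) G).edges =
                2 • cycleEdges n f + {s(u, w0)}) ∨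
           (∃ v : V, s(u, v) ∈ cycleEdges n f ∧ s(v, w0) ∈ cycleEdges n f ∧
              (mapGraph (collapseFun W0 w0) G).edges =
                2 • cycleEdges n f + {s(u, v), s(v, w0)}) ∨
           (s(u, w0) ∈ cycleEdges n f ∧
              (mapGraph (collapseFun W0 w0) G).edges =
                2 • cycleEdges n f + {s(u, w0)}))

section StatementNineteenAux

open scoped Fin.NatCast Fin.CommRing

variable {V : Type}

lemma walkEdges_cons_cons (a b : V) (t : List V) :
    walkEdges (a :: b :: t) = s(a, b) ::ₘ walkEdges (b :: t) := by
  simp [walkEdges]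

lemma walk_cross (X : Finset V) :
    ∀ (l : List V) (u v : V), IsWalk l u v → ¬(u ∈ X ↔ v ∈ X) →
    ∃ a b, s(a, b) ∈ walkEdges l ∧ a ∈ X ∧ b ∉ X := by
  intro l
  induction l with
  | nil => intro u v h hx; exact absurd h.1 (by simp)
  | cons a t ih =>
    intro u v h hx
    obtain ⟨h1, h2⟩ := h
    have hau : a = u := by simpa using h1
    subst hau
    cases t with
    | nil =>
      have hav : a = v := by simpa using h2
      subst hav
      exact absurd Iff.rfl hx
    | cons b t' =>
      by_cases hb : (b ∈ X) ↔ (a ∈ X)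
      · have hw : IsWalk (b :: t') b v :=
          ⟨rfl, by simpa [List.getLast?_cons_cons] using h2⟩
        obtain ⟨x, y, hmem, hx', hy'⟩ := ih b v hw (by tauto)
        exact ⟨x, y, by rw [walkEdges_cons_cons]; exact Multiset.mem_cons_of_mem hmem, hx', hy'⟩
      · by_cases ha : a ∈ X
        · refine ⟨a, b, ?_, ha, by tauto⟩
          rw [walkEdges_cons_cons]; exact Multiset.mem_cons_self _ _
        · refine ⟨b, a, ?_, by tauto, ha⟩
          rw [walkEdges_cons_cons]
          exact Multiset.mem_cons.mpr (Or.inl Sym2.eq_swap)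

lemma dcut_map_le (G : MG V) (c : V → V) (Y : Finset V) :
    dcut G (G.verts.filter fun v => c v ∈ Y) ≤ dcut (mapGraph c G) Y := by
  set X := G.verts.filter fun v => c v ∈ Y with hX
  have key : ∀ e ∈ (cutEdges G X).map (Sym2.map c),
      ¬ e.IsDiag ∧ (∃ u v, e = s(u, v) ∧ u ∈ Y ∧ v ∉ Y) := by
    intro e he
    obtain ⟨e', he', rfl⟩ := Multiset.mem_map.mp he
    rw [cutEdges, Multiset.mem_filter] at he'
    obtain ⟨heG, u, v, rfl, hu, hv⟩ := he'
    have hcu : c u ∈ Y := (Finset.mem_filter.mp hu).2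
    have hvG : v ∈ G.verts := G.edge_support _ heG v (by simp)
    have hcv : c v ∉ Y := fun h => hv (Finset.mem_filter.mpr ⟨hvG, h⟩)
    have hne : c u ≠ c v := fun h => hcv (h ▸ hcu)
    refine ⟨?_, c u, c v, by simp, hcu, hcv⟩
    simpa using hne
  set M := (cutEdges G X).map (Sym2.map c) with hM
  have e1 : M.filter (fun e => ¬ e.IsDiag) = M :=
    Multiset.filter_eq_self.mpr fun e he => (key e he).1
  have e2 : M.filter (fun e => ∃ u v, e = s(u, v) ∧ u ∈ Y ∧ v ∉ Y) = M :=
    Multiset.filter_eq_self.mpr fun e he => (key e he).2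
  have hle : M ≤ cutEdges (mapGraph c G) Y := by
    have s1 : M ≤ G.edges.map (Sym2.map c) :=
      Multiset.map_le_map (Multiset.filter_le _ _)
    have s2 : M.filter (fun e => ¬ e.IsDiag) ≤ (mapGraph c G).edges :=
      Multiset.filter_le_filter _ s1
    rw [e1] at s2
    have s3 : M.filter (fun e => ∃ u v, e = s(u, v) ∧ u ∈ Y ∧ v ∉ Y) ≤
        cutEdges (mapGraph c G) Y := Multiset.filter_le_filter _ s2
    rwa [e2] at s3
  have : (cutEdges G X).card = M.card := (Multiset.card_map _ _).symm
  rw [dcut, this]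
  exact Multiset.card_le_card hle

/-- Cyclic arc of indices starting at `a`, of length `len`. -/
def arcF (n : ℕ) [NeZero n] (a : Fin n) (len : ℕ) : Finset (Fin n) :=
  (Finset.range len).image fun (j : ℕ) => a + (j : Fin n)

lemma mem_arcF {n : ℕ} [NeZero n] {a : Fin n} {len : ℕ} (hlen : len ≤ n) (i : Fin n) :
    i ∈ arcF n a len ↔ ((i - a : Fin n) : ℕ) < len := by
  constructor
  · intro hi
    rw [arcF, Finset.mem_image] at hi
    obtain ⟨j, hj, rfl⟩ := hi
    rw [Finset.mem_range] at hj
    have h1 : (a + (j : Fin n)) - a = (j : Fin n) := by ring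
    rw [h1]
    have h2 : ((j : Fin n) : ℕ) = j % n := Fin.val_natCast j n
    rw [h2]
    exact lt_of_le_of_lt (Nat.mod_le _ _) hj
  · intro hi
    rw [arcF, Finset.mem_image]
    refine ⟨((i - a : Fin n) : ℕ), Finset.mem_range.mpr hi, ?_⟩
    rw [Fin.cast_val_eq_self]
    ring

lemma cycleEdges_eq {n : ℕ} [NeZero n] (hn : 2 ≤ n) (f : Fin n → V) :
    cycleEdges n f = Multiset.map (fun i : Fin n => s(f i, f (i + 1))) Finset.univ.val := by
  rw [cycleEdges]
  refine Multiset.map_congr rfl fun i _ => ?_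
  have he : (⟨((i : ℕ) + 1) % n, Nat.mod_lt _ i.pos⟩ : Fin n) = i + 1 := by
    apply Fin.ext
    rw [Fin.add_def, Fin.val_one']
    simp [Nat.mod_eq_of_lt (show 1 < n by omega)]
  rw [he]

lemma dcut_doubledCycle_arc {n : ℕ} [NeZero n] (hn : 2 ≤ n) (H : MG V) (f : Fin n → V)
    (hfinj : Function.Injective f) (hedges : H.edges = 2 • cycleEdges n f)
    (a : Fin n) (len : ℕ) (hl1 : 1 ≤ len) (hl2 : len ≤ n - 1) :
    dcut H ((arcF n a len).image f) ≤ 4 := by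
  have hlen : len ≤ n := by omega
  set Y := (arcF n a len).image f with hY
  have hfY : ∀ z : Fin n, f z ∈ Y ↔ z ∈ arcF n a len := by
    intro z
    constructor
    · intro h
      obtain ⟨w, hw, hwz⟩ := Finset.mem_image.mp h
      rwa [hfinj hwz] at hw
    · exact Finset.mem_image_of_mem f
  have hsub : ∀ i : Fin n, (∃ u v, s(f i, f (i + 1)) = s(u, v) ∧ u ∈ Y ∧ v ∉ Y) →
      i = a + ((len - 1 : ℕ) : Fin n) ∨ i = a + ((n - 1 : ℕ) : Fin n) := by
    intro i hpi
    obtain ⟨u, v, huv, hu, hv⟩ := hpi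
    rw [Sym2.eq_iff] at huv
    set x := ((i - a : Fin n) : ℕ) with hx
    have hxlt : x < n := (i - a).isLt
    have hsucc : ((i + 1 - a : Fin n) : ℕ) = (x + 1) % n := by
      have h1 : i + 1 - a = (i - a) + 1 := by ring
      rw [h1, Fin.add_def, Fin.val_one']
      rw [Nat.mod_eq_of_lt (by omega : 1 < n)]
    have hi_eq : i = a + ((x : ℕ) : Fin n) := by
      rw [hx, Fin.cast_val_eq_self]
      ring
    have key : (i ∈ arcF n a len ∧ i + 1 ∉ arcF n a len) ∨
        (i + 1 ∈ arcF n a len ∧ i ∉ arcF n a len) := by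
      rcases huv with ⟨hu', hv'⟩ | ⟨hu', hv'⟩
      · left
        rw [← hu'] at hu
        rw [← hv'] at hv
        exact ⟨(hfY i).mp hu, fun h => hv ((hfY _).mpr h)⟩
      · right
        rw [← hv'] at hu
        rw [← hu'] at hv
        exact ⟨(hfY _).mp hu, fun h => hv ((hfY i).mpr h)⟩
    rcases key with ⟨hin, hout⟩ | ⟨hin, hout⟩
    · rw [mem_arcF hlen] at hin hout
      rw [hsucc] at hout
      left
      have hxval : x = len - 1 := by
        rcases Nat.lt_or_ge (x + 1) n with h | h
        · rw [Nat.mod_eq_of_lt h] at hout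
          omega
        · exfalso
          have hxe : x + 1 = n := by omega
          rw [hxe, Nat.mod_self] at hout
          omega
      rw [hi_eq, hxval]
    · rw [mem_arcF hlen] at hin hout
      rw [hsucc] at hin
      right
      have hxval : x = n - 1 := by
        rcases Nat.lt_or_ge (x + 1) n with h | h
        · exfalso
          rw [Nat.mod_eq_of_lt h] at hin
          omega
        · omega
      rw [hi_eq, hxval]
  rw [dcut, cutEdges, hedges, two_nsmul, Multiset.filter_add, Multiset.card_add]
  have hc : (Multiset.filter (fun e => ∃ u v, e = s(u, v) ∧ u ∈ Y ∧ v ∉ Y)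
      (cycleEdges n f)).card ≤ 2 := by
    rw [cycleEdges_eq (by omega) f, Multiset.filter_map, Multiset.card_map]
    have hnodup : (Multiset.filter
        ((fun e => ∃ u v, e = s(u, v) ∧ u ∈ Y ∧ v ∉ Y) ∘ fun i : Fin n => s(f i, f (i + 1)))
        Finset.univ.val).Nodup := Multiset.Nodup.filter _ Finset.univ.nodup
    have hsubm : Multiset.filter
        ((fun e => ∃ u v, e = s(u, v) ∧ u ∈ Y ∧ v ∉ Y) ∘ fun i : Fin n => s(f i, f (i + 1)))
        Finset.univ.val ⊆
        (a + ((len - 1 : ℕ) : Fin n)) ::ₘ (a + ((n - 1 : ℕ) : Fin n)) ::ₘ 0 := by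
      intro i hi
      have hi2 := Multiset.mem_filter.mp hi
      rcases hsub i hi2.2 with h | h <;> simp [h]
    have hle2 : Multiset.filter
        ((fun e => ∃ u v, e = s(u, v) ∧ u ∈ Y ∧ v ∉ Y) ∘ fun i : Fin n => s(f i, f (i + 1)))
        Finset.univ.val ≤ (a + ((len - 1 : ℕ) : Fin n)) ::ₘ (a + ((n - 1 : ℕ) : Fin n)) ::ₘ 0 :=
      (Multiset.le_iff_subset hnodup).mpr hsubm
    have := Multiset.card_le_card hle2
    simpa using this
  omega

end StatementNineteenAux

section StatementNineteenAux2

open scoped Fin.NatCast Fin.CommRing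

variable {V : Type}

lemma filter_card_cons_pos {α : Type} (p : α → Prop) [DecidablePred p] {e : α}
    (s : Multiset α) (h : p e) {m : ℕ} (hs : m ≤ (s.filter p).card) :
    m + 1 ≤ ((e ::ₘ s).filter p).card := by
  rw [Multiset.filter_cons_of_pos _ h, Multiset.card_cons]
  omega

lemma filter_card_cons_any {α : Type} (p : α → Prop) [DecidablePred p] (e : α)
    (s : Multiset α) {m : ℕ} (hs : m ≤ (s.filter p).card) :
    m ≤ ((e ::ₘ s).filter p).card := by
  rw [Multiset.filter_cons, Multiset.card_add]
  omega

lemma sep_count (φ : Fin 5 → V) (X : Finset V) (r : Fin 5) (hr : r ≠ 0)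
    (h0 : φ 0 ∈ X) (hrX : φ r ∈ X) (hj : ∀ j, j ≠ 0 → j ≠ r → φ j ∉ X) :
    5 ≤ (w4Edges.filter fun e => ∃ u v, e = s(u, v) ∧ φ u ∈ X ∧ φ v ∉ X).card := by
  set p : Sym2 (Fin 5) → Prop := fun e => ∃ u v, e = s(u, v) ∧ φ u ∈ X ∧ φ v ∉ X with hp
  have hz : (0 : ℕ) ≤ ((0 : Multiset (Sym2 (Fin 5))).filter p).card := Nat.zero_le _
  show 5 ≤ (Multiset.filter p w4Edges).card
  fin_cases r
  · exact absurd rfl hr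
  · -- r = 1
    have e8 := filter_card_cons_pos p (0 : Multiset (Sym2 (Fin 5)))
      (⟨1, 4, Sym2.eq_swap, hrX, hj 4 (by decide) (by decide)⟩ : p s(4, 1)) hz
    have e7 := filter_card_cons_any p s(3, 4) _ e8
    have e6 := filter_card_cons_any p s(2, 3) _ e7
    have e5 := filter_card_cons_pos p _
      (⟨1, 2, rfl, hrX, hj 2 (by decide) (by decide)⟩ : p s(1, 2)) e6
    have e4 := filter_card_cons_pos p _
      (⟨0, 4, rfl, h0, hj 4 (by decide) (by decide)⟩ : p s(0, 4)) e5
    have e3 := filter_card_cons_pos p _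
      (⟨0, 3, rfl, h0, hj 3 (by decide) (by decide)⟩ : p s(0, 3)) e4
    have e2 := filter_card_cons_pos p _
      (⟨0, 2, rfl, h0, hj 2 (by decide) (by decide)⟩ : p s(0, 2)) e3
    have e1 := filter_card_cons_any p s(0, 1) _ e2
    exact e1
  · -- r = 2
    have e8 := filter_card_cons_any p s(4, 1) (0 : Multiset (Sym2 (Fin 5))) hz
    have e7 := filter_card_cons_any p s(3, 4) _ e8
    have e6 := filter_card_cons_pos p _
      (⟨2, 3, rfl, hrX, hj 3 (by decide) (by decide)⟩ : p s(2, 3)) e7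
    have e5 := filter_card_cons_pos p _
      (⟨2, 1, Sym2.eq_swap, hrX, hj 1 (by decide) (by decide)⟩ : p s(1, 2)) e6
    have e4 := filter_card_cons_pos p _
      (⟨0, 4, rfl, h0, hj 4 (by decide) (by decide)⟩ : p s(0, 4)) e5
    have e3 := filter_card_cons_pos p _
      (⟨0, 3, rfl, h0, hj 3 (by decide) (by decide)⟩ : p s(0, 3)) e4
    have e2 := filter_card_cons_any p s(0, 2) _ e3
    have e1 := filter_card_cons_pos p _
      (⟨0, 1, rfl, h0, hj 1 (by decide) (by decide)⟩ : p s(0, 1)) e2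
    exact e1
  · -- r = 3
    have e8 := filter_card_cons_any p s(4, 1) (0 : Multiset (Sym2 (Fin 5))) hz
    have e7 := filter_card_cons_pos p _
      (⟨3, 4, rfl, hrX, hj 4 (by decide) (by decide)⟩ : p s(3, 4)) e8
    have e6 := filter_card_cons_pos p _
      (⟨3, 2, Sym2.eq_swap, hrX, hj 2 (by decide) (by decide)⟩ : p s(2, 3)) e7
    have e5 := filter_card_cons_any p s(1, 2) _ e6
    have e4 := filter_card_cons_pos p _
      (⟨0, 4, rfl, h0, hj 4 (by decide) (by decide)⟩ : p s(0, 4)) e5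
    have e3 := filter_card_cons_any p s(0, 3) _ e4
    have e2 := filter_card_cons_pos p _
      (⟨0, 2, rfl, h0, hj 2 (by decide) (by decide)⟩ : p s(0, 2)) e3
    have e1 := filter_card_cons_pos p _
      (⟨0, 1, rfl, h0, hj 1 (by decide) (by decide)⟩ : p s(0, 1)) e2
    exact e1
  · -- r = 4
    have e8 := filter_card_cons_pos p (0 : Multiset (Sym2 (Fin 5)))
      (⟨4, 1, rfl, hrX, hj 1 (by decide) (by decide)⟩ : p s(4, 1)) hz
    have e7 := filter_card_cons_pos p _
      (⟨4, 3, Sym2.eq_swap, hrX, hj 3 (by decide) (by decide)⟩ : p s(3, 4)) e8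
    have e6 := filter_card_cons_any p s(2, 3) _ e7
    have e5 := filter_card_cons_any p s(1, 2) _ e6
    have e4 := filter_card_cons_any p s(0, 4) _ e5
    have e3 := filter_card_cons_pos p _
      (⟨0, 3, rfl, h0, hj 3 (by decide) (by decide)⟩ : p s(0, 3)) e4
    have e2 := filter_card_cons_pos p _
      (⟨0, 2, rfl, h0, hj 2 (by decide) (by decide)⟩ : p s(0, 2)) e3
    have e1 := filter_card_cons_pos p _
      (⟨0, 1, rfl, h0, hj 1 (by decide) (by decide)⟩ : p s(0, 1)) e2
    exact e1

lemma filter_sum' {α : Type} (p : α → Prop) [DecidablePred p] (s : Multiset (Multiset α)) :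
    (s.map (Multiset.filter p)).sum = s.sum.filter p := by
  induction s using Multiset.induction with
  | empty => simp
  | cons a s ih => simp [Multiset.filter_add, ih]

lemma card_sum' {α : Type} (s : Multiset (Multiset α)) :
    s.sum.card = (s.map Multiset.card).sum := by
  induction s using Multiset.induction with
  | empty => simp
  | cons a s ih => simp [ih]

lemma sum_le_sum' {α : Type} (s t : Multiset (Multiset α)) (h : s ≤ t) : s.sum ≤ t.sum := by
  obtain ⟨u, rfl⟩ := Multiset.le_iff_exists_add.mp h
  simp

lemma immersion_demand (G : MG V) (X : Finset V) (φ : Fin 5 → V)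
    (him : ImmersionVia G w4Edges φ) (r : Fin 5) (hr : r ≠ 0)
    (h0 : φ 0 ∈ X) (hrX : φ r ∈ X) (hj : ∀ j, j ≠ 0 → j ≠ r → φ j ∉ X) :
    5 ≤ dcut G X := by
  obtain ⟨hinj, hverts, P, hPmap, hPwalk, hPle⟩ := him
  set sep : Sym2 (Fin 5) → Prop := fun e => ∃ u v, e = s(u, v) ∧ φ u ∈ X ∧ φ v ∉ X with hsep
  set cross : Sym2 V → Prop := fun e => ∃ u v, e = s(u, v) ∧ u ∈ X ∧ v ∉ X with hcross
  set Q := P.filter (sep ∘ Prod.fst) with hQ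
  have hQcard : 5 ≤ Q.card := by
    have h5 := sep_count φ X r hr h0 hrX hj
    have hfm : (P.map Prod.fst).filter sep = Q.map Prod.fst :=
      Multiset.filter_map sep Prod.fst P
    rw [hPmap] at hfm
    calc 5 ≤ (w4Edges.filter sep).card := h5
      _ = (Q.map Prod.fst).card := by rw [hfm]
      _ = Q.card := Multiset.card_map _ _
  have hone : ∀ q ∈ Q, 1 ≤ ((walkEdges q.2).filter cross).card := by
    intro q hq
    have hqP : q ∈ P := Multiset.mem_of_mem_filter hq
    have hqs : sep q.1 := (Multiset.mem_filter.mp hq).2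
    obtain ⟨u, v, he, hu, hv⟩ := hqs
    obtain ⟨u', v', he', hwalk⟩ := hPwalk q hqP
    rw [he, Sym2.eq_iff] at he'
    have hsep' : ¬(φ u' ∈ X ↔ φ v' ∈ X) := by
      rcases he' with ⟨h1, h2⟩ | ⟨h1, h2⟩
      · rw [← h1, ← h2]; tauto
      · rw [← h1, ← h2]; tauto
    obtain ⟨a, b, hmem, ha, hb⟩ := walk_cross X q.2 _ _ hwalk hsep'
    have hm : s(a, b) ∈ (walkEdges q.2).filter cross :=
      Multiset.mem_filter.mpr ⟨hmem, ⟨a, b, rfl, ha, hb⟩⟩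
    exact Multiset.card_pos.mpr fun h0' => by rw [h0'] at hm; simp at hm
  have e1 : (Q.map fun q => (walkEdges q.2).filter cross).sum ≤ cutEdges G X := by
    have hmm : (Q.map fun q => (walkEdges q.2).filter cross) =
        ((Q.map fun q => walkEdges q.2).map (Multiset.filter cross)) := by
      rw [Multiset.map_map]; rfl
    rw [hmm, filter_sum']
    have hle2 : (Q.map fun q => walkEdges q.2).sum ≤ G.edges := by
      refine le_trans (sum_le_sum' _ _ (Multiset.map_le_map (Multiset.filter_le _ _))) ?_
      exact hPle
    exact Multiset.filter_le_filter _ hle2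
  have e2 : 5 ≤ ((Q.map fun q => (walkEdges q.2).filter cross).sum).card := by
    rw [card_sum', Multiset.map_map]
    calc 5 ≤ Q.card := hQcard
      _ = (Q.map fun _ => (1 : ℕ)).sum := by simp
      _ ≤ _ := Multiset.sum_map_le_sum_map _ _ hone
  exact le_trans e2 (Multiset.card_le_card e1)

lemma select_arc {n : ℕ} [NeZero n] (hn : 3 ≤ n) (k : Fin 5 → Fin n)
    (hup : ∀ i j i' j' : Fin 5, i ≠ j → i' ≠ j' → k i = k j → k i' = k j' →
      (i = i' ∧ j = j') ∨ (i = j' ∧ j = i')) :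
    ∃ (r : Fin 5) (a : Fin n) (len : ℕ), r ≠ 0 ∧ 1 ≤ len ∧ len ≤ n - 1 ∧
      k 0 ∈ arcF n a len ∧ k r ∈ arcF n a len ∧
      ∀ j, j ≠ 0 → j ≠ r → k j ∉ arcF n a len := by
  by_cases hc : ∃ r : Fin 5, r ≠ 0 ∧ k r = k 0
  · obtain ⟨r, hr0, hrk⟩ := hc
    refine ⟨r, k 0, 1, hr0, le_refl 1, by omega, ?_, ?_, ?_⟩
    · rw [mem_arcF (by omega)]; simp
    · rw [mem_arcF (by omega), hrk]; simp
    · intro j hj0 hjr hmem'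
      rw [mem_arcF (by omega)] at hmem'
      have hz : ((k j - k 0 : Fin n) : ℕ) = 0 := by omega
      have hkj : k j = k 0 := by
        have : k j - k 0 = 0 := Fin.ext hz
        rwa [sub_eq_zero] at this
      rcases hup j 0 r 0 hj0 hr0 hkj hrk with ⟨h1, _⟩ | ⟨h1, _⟩
      · exact hjr h1
      · exact hj0 h1
  · push_neg at hc
    set d : Fin 5 → ℕ := fun j => ((k j - k 0 : Fin n) : ℕ) with hd
    have hd0 : ∀ j, j ≠ 0 → 1 ≤ d j := by
      intro j hj
      rcases Nat.eq_zero_or_pos (d j) with h | h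
      · exfalso
        apply hc j hj
        have : k j - k 0 = 0 := Fin.ext h
        rwa [sub_eq_zero] at this
      · exact h
    have hdlt : ∀ j, d j < n := fun j => (k j - k 0).isLt
    have hsame : ∀ i j : Fin 5, d i = d j → k i = k j := by
      intro i j hij
      have h1 : k i - k 0 = k j - k 0 := Fin.ext hij
      exact sub_left_inj.mp h1
    set R : Finset (Fin 5) := Finset.univ.erase 0 with hR
    have hRmem : ∀ j : Fin 5, j ∈ R ↔ j ≠ 0 := by intro j; simp [hR]
    have hRne : R.Nonempty := ⟨1, by simp [hR]⟩
    obtain ⟨rD, hrD, hDmin⟩ := R.exists_min_image d hRne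
    obtain ⟨rM, hrM, hMmax⟩ := R.exists_max_image d hRne
    have hDM : d rD < d rM := by
      rcases Nat.lt_or_ge (d rD) (d rM) with h | h
      · exact h
      · exfalso
        have hall : ∀ j ∈ R, d j = d rD := fun j hj =>
          le_antisymm (le_trans (hMmax j hj) h) (hDmin j hj)
        have h12 : k 1 = k 2 := hsame _ _ (by
          rw [hall 1 (by simp [hR]), hall 2 (by simp [hR])])
        have h13 : k 1 = k 3 := hsame _ _ (by
          rw [hall 1 (by simp [hR]), hall 3 (by simp [hR])])
        rcases hup 1 2 1 3 (by decide) (by decide) h12 h13 with ⟨_, h23⟩ | ⟨h13', _⟩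
        · exact absurd h23 (by decide)
        · exact absurd h13' (by decide)
    by_cases hu : ∀ j ∈ R, d j = d rD → j = rD
    · refine ⟨rD, k 0, d rD + 1, (hRmem rD).mp hrD, by omega, ?_, ?_, ?_, ?_⟩
      · have := hdlt rM; omega
      · rw [mem_arcF (by have := hdlt rM; omega)]
        simp
      · rw [mem_arcF (by have := hdlt rM; omega)]
        have : ((k rD - k 0 : Fin n) : ℕ) = d rD := rfl
        omega
      · intro j hj0 hjr hmemj
        rw [mem_arcF (by have := hdlt rM; omega)] at hmemj
        have h1 : d j ≤ d rD := by
          have : ((k j - k 0 : Fin n) : ℕ) = d j := rfl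
          omega
        have h2 : d rD ≤ d j := hDmin j ((hRmem j).mpr hj0)
        exact hjr (hu j ((hRmem j).mpr hj0) (le_antisymm h1 h2))
    · push_neg at hu
      obtain ⟨r', hr'R, hr'd, hr'ne⟩ := hu
      have hpair : k r' = k rD := hsame _ _ hr'd
      have huM : ∀ j ∈ R, d j = d rM → j = rM := by
        intro j hjR hjd
        by_contra hne
        have hkk : k j = k rM := hsame _ _ (by rw [hjd])
        rcases hup j rM r' rD hne hr'ne hkk hpair with ⟨h1, h2⟩ | ⟨h1, h2⟩
        · have : d rM = d rD := by rw [h2]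
          omega
        · have : d rM = d r' := by rw [h2]
          rw [hr'd] at this
          omega
      have hM2 : 2 ≤ d rM := by
        have := hd0 rD ((hRmem rD).mp hrD)
        omega
      have hMlt : d rM < n := hdlt rM
      have hval : ∀ j : Fin 5, ((k j - k rM : Fin n) : ℕ) = (d j + (n - d rM)) % n := by
        intro j
        have e1 : k j - k rM = (k j - k 0) - (k rM - k 0) := by ring
        rw [e1, Fin.sub_def]
        show (n - ((k rM - k 0 : Fin n) : ℕ) + ((k j - k 0 : Fin n) : ℕ)) % n = _
        have h1 : ((k rM - k 0 : Fin n) : ℕ) = d rM := rfl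
        have h2 : ((k j - k 0 : Fin n) : ℕ) = d j := rfl
        rw [h1, h2, Nat.add_comm]
      refine ⟨rM, k rM, n - d rM + 1, (hRmem rM).mp hrM, by omega, by omega, ?_, ?_, ?_⟩
      · rw [mem_arcF (by omega), hval 0]
        have hdd : d 0 = 0 := by
          have : k 0 - k 0 = 0 := sub_self _
          simp [hd, this]
        rw [hdd, Nat.zero_add, Nat.mod_eq_of_lt (by omega)]
        omega
      · rw [mem_arcF (by omega), hval rM]
        have : d rM + (n - d rM) = n := by omega
        rw [this, Nat.mod_self]
        omega
      · intro j hj0 hjr hmemj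
        rw [mem_arcF (by omega), hval j] at hmemj
        have hjM : d j < d rM := by
          have h1 : d j ≤ d rM := hMmax j ((hRmem j).mpr hj0)
          have h2 : d j ≠ d rM := fun h => hjr (huM j ((hRmem j).mpr hj0) h)
          omega
        have h1j : 1 ≤ d j := hd0 j hj0
        rw [Nat.mod_eq_of_lt (by omega)] at hmemj
        omega

end StatementNineteenAux2

/-- Let `G` be a `3`-edge-connected, internally `4`-edge-connected
graph with `|V(G)| ≥ 5`, and suppose there exists `W₀ ⊂ V(G)` with `1 ≤ |W₀| ≤ 2`
such that the graph obtained from `G` by identifying `W₀` to a single vertex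
(deleting any resulting loops) is a doubled cycle.  Then `G` has no immersion of
`W₄`. -/
theorem statement_19 {V : Type} (G : MG V)
    (h3 : EdgeConn G 3) (h4 : InternallyEdgeConn G 4) (hcard : 5 ≤ G.verts.card)
    (W0 : Finset V) (hW0 : W0 ⊆ G.verts) (hW1 : 1 ≤ W0.card) (hW2 : W0.card ≤ 2)
    (w0 : V) (hw0 : w0 ∈ W0)
    (hdc : IsDoubledCycle (mapGraph (collapseFun W0 w0) G)) :
    ¬ HasW4Immersion G := by
  rintro ⟨φ, hφ⟩
  obtain ⟨n, hn3, f, hfinj, hfim, hfedges⟩ := hdc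
  haveI : NeZero n := ⟨by omega⟩
  have hinj : Function.Injective φ := hφ.1
  have hverts : ∀ w, φ w ∈ G.verts := hφ.2.1
  set c : V → V := collapseFun W0 w0 with hc
  have hkex : ∀ i : Fin 5, ∃ kk : Fin n, f kk = c (φ i) := by
    intro i
    have h1 : c (φ i) ∈ (mapGraph c G).verts := Finset.mem_image_of_mem c (hverts i)
    rw [← hfim] at h1
    obtain ⟨kk, _, hkk⟩ := Finset.mem_image.mp h1
    exact ⟨kk, hkk⟩
  choose k hk using hkex
  have hco : ∀ i j : Fin 5, i ≠ j → k i = k j → φ i ∈ W0 ∧ φ j ∈ W0 := by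
    intro i j hij hkij
    have hcc : c (φ i) = c (φ j) := by rw [← hk i, ← hk j, hkij]
    have hne : φ i ≠ φ j := fun h => hij (hinj h)
    by_cases hi : φ i ∈ W0 <;> by_cases hj : φ j ∈ W0
    · exact ⟨hi, hj⟩
    · exfalso
      rw [hc] at hcc
      simp only [collapseFun, if_pos hi, if_neg hj] at hcc
      exact hj (hcc ▸ hw0)
    · exfalso
      rw [hc] at hcc
      simp only [collapseFun, if_neg hi, if_pos hj] at hcc
      exact hi (hcc ▸ hw0)
    · exfalso
      rw [hc] at hcc
      simp only [collapseFun, if_neg hi, if_neg hj] at hcc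
      exact hne hcc
  have hup : ∀ i j i' j' : Fin 5, i ≠ j → i' ≠ j' → k i = k j → k i' = k j' →
      (i = i' ∧ j = j') ∨ (i = j' ∧ j = i') := by
    intro i j i' j' hij hij' h1 h2
    obtain ⟨hi, hj⟩ := hco i j hij h1
    obtain ⟨hi', hj'⟩ := hco i' j' hij' h2
    have hsub : ({φ i, φ j} : Finset V) ⊆ W0 := by
      intro x hx
      rcases Finset.mem_insert.mp hx with h | h
      · rwa [h]
      · rw [Finset.mem_singleton] at h
        rwa [h]
    have hcard : ({φ i, φ j} : Finset V).card = 2 :=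
      Finset.card_pair fun h => hij (hinj h)
    have hWeq : ({φ i, φ j} : Finset V) = W0 :=
      Finset.eq_of_subset_of_card_le hsub (by omega)
    have hi'm : φ i' ∈ ({φ i, φ j} : Finset V) := hWeq ▸ hi'
    have hj'm : φ j' ∈ ({φ i, φ j} : Finset V) := hWeq ▸ hj'
    simp only [Finset.mem_insert, Finset.mem_singleton] at hi'm hj'm
    rcases hi'm with h | h <;> rcases hj'm with h' | h'
    · exact absurd (hinj (h.trans h'.symm)) hij'
    · exact Or.inl ⟨hinj h.symm, hinj h'.symm⟩
    · exact Or.inr ⟨hinj h'.symm, hinj h.symm⟩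
    · exact absurd (hinj (h.trans h'.symm)) hij'
  obtain ⟨r, a, len, hr0, hlen1, hlen2, hk0, hkr, hkj⟩ := select_arc hn3 k hup
  set Y : Finset V := (arcF n a len).image f with hY
  set X : Finset V := G.verts.filter (fun v => c v ∈ Y) with hX
  have hcut : dcut G X ≤ 4 :=
    le_trans (dcut_map_le G c Y)
      (dcut_doubledCycle_arc (by omega) (mapGraph c G) f hfinj hfedges a len hlen1 hlen2)
  have h5 : 5 ≤ dcut G X := by
    apply immersion_demand G X φ hφ r hr0
    · rw [hX, Finset.mem_filter]
      refine ⟨hverts 0, ?_⟩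
      rw [← hk 0]
      exact Finset.mem_image_of_mem f hk0
    · rw [hX, Finset.mem_filter]
      refine ⟨hverts r, ?_⟩
      rw [← hk r]
      exact Finset.mem_image_of_mem f hkr
    · intro j hj0 hjr
      rw [hX, Finset.mem_filter]
      rintro ⟨-, hmem⟩
      rw [← hk j, hY] at hmem
      obtain ⟨z, hz, hzf⟩ := Finset.mem_image.mp hmem
      rw [hfinj hzf] at hz
      exact hkj j hj0 hjr hz
  omega


end PaperW4
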